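/- Optimal design transfer (Theorem 'mu to lambda'): Let X ⊂ ℝ^d be finite and spanning, and Z = { vec(x x'^T) : (x,x') ∈ X² } ⊂ ℝ^{d²}. If μ⋆ ∈ simplex(X) minimizes μ ↦ max_{x'∈X} x'^T (Σ_{x} μ_x x x^T)^{-1} x', and λ⋆ ∈ simplex(Z) is defined by λ⋆_{vec(x x'^T)} = μ⋆_x μ⋆_{x'}, then λ⋆ minimizes λ ↦ max_{z'∈Z} z'^T (Σ_{z} λ_z z z^T)^{-1} z' over simplex(Z), and the minimum values are d and d² respectively. -/

import Mathlib

open Matrix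
open scoped Classical

/-- `vec` of a `d × d` matrix, indexed by `Fin d × Fin d`. -/
def matVec {d : ℕ} (B : Matrix (Fin d) (Fin d) ℝ) : Fin d × Fin d → ℝ :=
  fun p => B p.1 p.2

/-- The G-optimal design objective over a finite set of vectors indexed by `ι`:
`h(λ) = max_{z'∈Z} z'ᵀ (Σ_{z∈Z} λ_z z zᵀ)⁻¹ z'` when the covariance matrix is
invertible, and `+∞` otherwise. -/
noncomputable def gObj {ι : Type*} [Fintype ι] [DecidableEq ι]
    (Z : Finset (ι → ℝ)) (hZ : Z.Nonempty) (lam : (ι → ℝ) → ℝ) : EReal :=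
  if IsUnit (∑ z ∈ Z, lam z • vecMulVec z z) then
    ((Z.sup' hZ fun z' => z' ⬝ᵥ (∑ z ∈ Z, lam z • vecMulVec z z)⁻¹.mulVec z' : ℝ) : EReal)
  else ⊤

/-!
The lower bound `n ≤ h(λ)` on `ℝⁿ` holds for every design: with `M` the information matrix,
`n = tr (M⁻¹ M) = ∑ λ_z zᵀ M⁻¹ z ≤ max_z zᵀ M⁻¹ z`. It is attained by a D-optimal design
(Kiefer–Wolfowitz): at a maximiser of `det M` over the simplex, moving a little mass towards `z`
cannot increase `det M`, and by the matrix determinant lemma this says `zᵀ M⁻¹ z ≤ n`.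
Hence the minimum on `X` is `d`. The information matrix of the product design `λ⋆` is
`M(μ⋆) ⊗ M(μ⋆)`, so its quadratic form at `vec (x x'ᵀ)` is `q(x) q(x')` with
`q(x) = xᵀ M(μ⋆)⁻¹ x`; the maximum over `Z` is `d · d = d²`, the lower bound on `ℝ^{d²}`.
-/

open scoped Kronecker

open Filter Topology in
theorem le_of_forall_pos_one_add_mul_le_one_add_pow {n : ℕ} {q : ℝ}
    (h : ∀ s > 0, 1 + s * q ≤ (1 + s) ^ n) : q ≤ n := by
  have hslope : Tendsto (fun s : ℝ => s⁻¹ * ((1 + s) ^ n - 1)) (𝓝[>] 0) (𝓝 n) := by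
    simpa using (hasDerivAt_pow n (1 : ℝ)).tendsto_slope_zero_right
  refine ge_of_tendsto hslope (eventually_nhdsWithin_of_forall fun s (hs : 0 < s) => ?_)
  rw [le_inv_mul_iff₀ hs]
  linarith [h s hs]

namespace Matrix

variable {ι R : Type*} [Fintype ι] [DecidableEq ι] [CommRing R]

theorem det_add_vecMulVec {A : Matrix ι ι R} (hA : IsUnit A.det) (u v : ι → R) :
    (A + vecMulVec u v).det = A.det * (1 + v ⬝ᵥ A⁻¹ *ᵥ u) := by
  calc (A + vecMulVec u v).det = (A * (1 + vecMulVec (A⁻¹ *ᵥ u) v)).det := by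
        rw [Matrix.mul_add, Matrix.mul_one, mul_vecMulVec, mulVec_mulVec,
          mul_nonsing_inv _ hA, one_mulVec]
    _ = A.det * (1 + v ⬝ᵥ A⁻¹ *ᵥ u) := by
        rw [det_mul, vecMulVec_eq Unit, det_one_add_replicateCol_mul_replicateRow]

end Matrix

section InfoMatrix

variable {ι κ : Type*} [Fintype κ] (v : κ → ι → ℝ)

noncomputable def infoMatrix : (κ → ℝ) →ₗ[ℝ] Matrix ι ι ℝ :=
  Fintype.linearCombination ℝ fun k => vecMulVec (v k) (v k)

variable {v}

theorem infoMatrix_apply (w : κ → ℝ) : infoMatrix v w = ∑ k, w k • vecMulVec (v k) (v k) :=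
  Fintype.linearCombination_apply _ _ _

theorem infoMatrix_single [DecidableEq κ] (k : κ) :
    infoMatrix v (Pi.single k 1) = vecMulVec (v k) (v k) := by
  rw [infoMatrix, Fintype.linearCombination_apply_single, one_smul]

variable [Fintype ι]

theorem posSemidef_infoMatrix {w : κ → ℝ} (hw : 0 ≤ w) : (infoMatrix v w).PosSemidef := by
  rw [infoMatrix_apply]
  exact posSemidef_sum _ fun k _ => (posSemidef_vecMulVec_self_star (v k)).smul (hw k)

theorem dotProduct_infoMatrix_mulVec (w : κ → ℝ) (u : ι → ℝ) :
    u ⬝ᵥ infoMatrix v w *ᵥ u = ∑ k, w k * (v k ⬝ᵥ u) ^ 2 := by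
  simp only [infoMatrix_apply, sum_mulVec, dotProduct_sum, smul_mulVec, dotProduct_smul,
    vecMulVec_mulVec, op_smul_eq_smul, smul_eq_mul]
  exact Finset.sum_congr rfl fun k _ => by rw [dotProduct_comm u]; ring

theorem posDef_infoMatrix (hv : Submodule.span ℝ (Set.range v) = ⊤) {w : κ → ℝ}
    (hw : ∀ k, 0 < w k) : (infoMatrix v w).PosDef := by
  refine .of_dotProduct_mulVec_pos (posSemidef_infoMatrix fun k => (hw k).le).isHermitian
    fun u hu => ?_
  rw [star_trivial, dotProduct_infoMatrix_mulVec]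
  by_contra! hle
  have horth : ∀ k, v k ⬝ᵥ u = 0 := by
    have hnonneg : ∀ k ∈ Finset.univ, 0 ≤ w k * (v k ⬝ᵥ u) ^ 2 :=
      fun k _ => mul_nonneg (hw k).le (sq_nonneg _)
    intro k
    simpa [(hw k).ne'] using (Finset.sum_eq_zero_iff_of_nonneg hnonneg).mp
      (hle.antisymm (Finset.sum_nonneg hnonneg)) k (Finset.mem_univ k)
  obtain ⟨c, hc⟩ :=
    (Submodule.mem_span_range_iff_exists_fun ℝ).mp (hv ▸ Submodule.mem_top : u ∈ _)
  apply hu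
  rw [← dotProduct_self_eq_zero]
  nth_rw 1 [← hc]
  simp [sum_dotProduct, smul_dotProduct, horth]

variable [DecidableEq ι]

theorem dotProduct_inv_infoMatrix_mulVec_le_card_of_isMaxOn {w : κ → ℝ}
    (hw : w ∈ stdSimplex ℝ κ) (hmax : IsMaxOn (fun w => (infoMatrix v w).det) (stdSimplex ℝ κ) w)
    (hpos : 0 < (infoMatrix v w).det) (k : κ) :
    v k ⬝ᵥ (infoMatrix v w)⁻¹ *ᵥ v k ≤ Fintype.card ι := by
  set A := infoMatrix v w
  refine le_of_forall_pos_one_add_mul_le_one_add_pow fun s hs => ?_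
  have hmem : (1 + s)⁻¹ • (w + s • Pi.single k 1) ∈ stdSimplex ℝ κ := by
    have := convex_stdSimplex ℝ κ hw (single_mem_stdSimplex ℝ k) (a := (1 + s)⁻¹)
      (b := s * (1 + s)⁻¹) (by positivity) (by positivity) (by field_simp)
    rwa [smul_add, smul_smul, mul_comm (1 + s)⁻¹ s]
  -- Moving mass `s / (1 + s)` onto `v k` multiplies the determinant by `(1 + s)⁻ⁿ (1 + s q)`.
  have hdet : (infoMatrix v ((1 + s)⁻¹ • (w + s • Pi.single k 1))).det
      = ((1 + s) ^ Fintype.card ι)⁻¹ * (A.det * (1 + s * (v k ⬝ᵥ A⁻¹ *ᵥ v k))) := by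
    rw [map_smul, map_add, map_smul, infoMatrix_single, det_smul, inv_pow, ← vecMulVec_smul,
      det_add_vecMulVec (isUnit_iff_ne_zero.mpr hpos.ne'), smul_dotProduct, smul_eq_mul]
  have hle : (infoMatrix v ((1 + s)⁻¹ • (w + s • Pi.single k 1))).det ≤ A.det := hmax hmem
  rw [hdet, inv_mul_le_iff₀ (by positivity), mul_comm _ A.det] at hle
  exact le_of_mul_le_mul_left hle hpos

theorem exists_mem_stdSimplex_forall_dotProduct_inv_infoMatrix_mulVec_le_card [Nonempty κ]
    (hv : Submodule.span ℝ (Set.range v) = ⊤) :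
    ∃ w ∈ stdSimplex ℝ κ, IsUnit (infoMatrix v w) ∧
      ∀ k, v k ⬝ᵥ (infoMatrix v w)⁻¹ *ᵥ v k ≤ Fintype.card ι := by
  obtain ⟨w, hw, hmax⟩ := (isCompact_stdSimplex ℝ κ).exists_isMaxOn
    ⟨_, stdSimplex.barycenter.2⟩
    ((infoMatrix v).continuous_of_finiteDimensional.matrix_det).continuousOn
  have hpos : 0 < (infoMatrix v w).det :=
    (posDef_infoMatrix hv fun k => by rw [stdSimplex.barycenter_apply]; positivity).det_pos
      |>.trans_le (hmax stdSimplex.barycenter.2)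
  exact ⟨w, hw, (isUnit_iff_isUnit_det _).mpr (isUnit_iff_ne_zero.mpr hpos.ne'),
    dotProduct_inv_infoMatrix_mulVec_le_card_of_isMaxOn hw hmax hpos⟩

end InfoMatrix

section Design

variable {ι : Type*}

noncomputable def covMatrix (Z : Finset (ι → ℝ)) (lam : (ι → ℝ) → ℝ) : Matrix ι ι ℝ :=
  ∑ z ∈ Z, lam z • vecMulVec z z

theorem covMatrix_eq_infoMatrix (X : Finset (ι → ℝ)) (w : X → ℝ) :
    covMatrix X (Function.extend Subtype.val w 0) = infoMatrix Subtype.val w := by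
  rw [covMatrix, infoMatrix_apply, ← Finset.sum_coe_sort X]
  simp only [Subtype.val_injective.extend_apply]

variable [Fintype ι]

theorem posSemidef_covMatrix {Z : Finset (ι → ℝ)} {lam : (ι → ℝ) → ℝ}
    (hlam : ∀ z ∈ Z, 0 ≤ lam z) : (covMatrix Z lam).PosSemidef :=
  posSemidef_sum _ fun z hz => (posSemidef_vecMulVec_self_star z).smul (hlam z hz)

theorem dotProduct_inv_covMatrix_mulVec_nonneg [DecidableEq ι] {Z : Finset (ι → ℝ)}
    {lam : (ι → ℝ) → ℝ} (hlam : ∀ z ∈ Z, 0 ≤ lam z) (x : ι → ℝ) :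
    0 ≤ x ⬝ᵥ (covMatrix Z lam)⁻¹ *ᵥ x :=
  (posSemidef_covMatrix hlam).inv.dotProduct_mulVec_nonneg x

theorem trace_mul_covMatrix (B : Matrix ι ι ℝ) (Z : Finset (ι → ℝ)) (lam : (ι → ℝ) → ℝ) :
    (B * covMatrix Z lam).trace = ∑ z ∈ Z, lam z * (z ⬝ᵥ B *ᵥ z) := by
  simp only [covMatrix, Matrix.mul_sum, trace_sum, Matrix.mul_smul, trace_smul, mul_vecMulVec,
    trace_vecMulVec, smul_eq_mul]
  exact Finset.sum_congr rfl fun z _ => by rw [dotProduct_comm]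

variable [DecidableEq ι]

theorem gObj_eq_ite (Z : Finset (ι → ℝ)) (hZ : Z.Nonempty) (lam : (ι → ℝ) → ℝ) :
    gObj Z hZ lam = if IsUnit (covMatrix Z lam) then
      ((Z.sup' hZ fun z => z ⬝ᵥ (covMatrix Z lam)⁻¹ *ᵥ z : ℝ) : EReal) else ⊤ :=
  rfl

theorem gObj_eq_coe_iff {Z : Finset (ι → ℝ)} {hZ : Z.Nonempty} {lam : (ι → ℝ) → ℝ} {a : ℝ} :
    gObj Z hZ lam = a ↔
      IsUnit (covMatrix Z lam) ∧ Z.sup' hZ (fun z => z ⬝ᵥ (covMatrix Z lam)⁻¹ *ᵥ z) = a := by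
  rw [gObj_eq_ite]
  split_ifs with h <;> simp [h]

theorem card_le_gObj (Z : Finset (ι → ℝ)) (hZ : Z.Nonempty) {lam : (ι → ℝ) → ℝ}
    (hlam0 : ∀ z ∈ Z, 0 ≤ lam z) (hlam1 : ∑ z ∈ Z, lam z = 1) :
    (Fintype.card ι : EReal) ≤ gObj Z hZ lam := by
  rw [gObj_eq_ite]
  split_ifs with hA
  · rw [← EReal.coe_coe_eq_natCast, EReal.coe_le_coe_iff]
    calc (Fintype.card ι : ℝ) = ((covMatrix Z lam)⁻¹ * covMatrix Z lam).trace := by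
          rw [nonsing_inv_mul _ ((isUnit_iff_isUnit_det _).mp hA), trace_one]
      _ = ∑ z ∈ Z, lam z * (z ⬝ᵥ (covMatrix Z lam)⁻¹ *ᵥ z) := trace_mul_covMatrix _ _ _
      _ ≤ ∑ z ∈ Z, lam z * Z.sup' hZ (fun z => z ⬝ᵥ (covMatrix Z lam)⁻¹ *ᵥ z) :=
          Finset.sum_le_sum fun z hz => mul_le_mul_of_nonneg_left
            (Finset.le_sup' (fun z => z ⬝ᵥ (covMatrix Z lam)⁻¹ *ᵥ z) hz) (hlam0 z hz)
      _ = _ := by rw [← Finset.sum_mul, hlam1, one_mul]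
  · exact le_top

theorem exists_gObj_le_card (X : Finset (ι → ℝ)) (hX : X.Nonempty)
    (hspan : Submodule.span ℝ (X : Set (ι → ℝ)) = ⊤) :
    ∃ mu : (ι → ℝ) → ℝ, (∀ x ∈ X, 0 ≤ mu x) ∧ ∑ x ∈ X, mu x = 1 ∧
      gObj X hX mu ≤ Fintype.card ι := by
  have : Nonempty X := hX.to_subtype
  obtain ⟨w, hw, hunit, hle⟩ :=
    exists_mem_stdSimplex_forall_dotProduct_inv_infoMatrix_mulVec_le_card
      (v := ((↑) : X → ι → ℝ)) (by rwa [Subtype.range_coe_subtype, Finset.setOfPred_mem])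
  refine ⟨Function.extend Subtype.val w 0, fun x hx => ?_, ?_, ?_⟩
  · rw [show x = ((⟨x, hx⟩ : X) : ι → ℝ) from rfl, Subtype.val_injective.extend_apply]
    exact hw.1 _
  · rw [← Finset.sum_coe_sort X]
    simpa only [Subtype.val_injective.extend_apply] using hw.2
  · rw [gObj_eq_ite, covMatrix_eq_infoMatrix, if_pos hunit, ← EReal.coe_coe_eq_natCast,
      EReal.coe_le_coe_iff]
    exact Finset.sup'_le _ _ fun x hx => hle ⟨x, hx⟩

end Design

theorem Finset.sup'_product_mul_of_nonneg {α β : Type*} {s : Finset α} {t : Finset β}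
    (hs : s.Nonempty) (ht : t.Nonempty) {f : α → ℝ} {g : β → ℝ} (hf : ∀ a ∈ s, 0 ≤ f a)
    (hg : ∀ b ∈ t, 0 ≤ g b) :
    (s ×ˢ t).sup' (hs.product ht) (fun p => f p.1 * g p.2) = s.sup' hs f * t.sup' ht g := by
  obtain ⟨a, ha, hfa⟩ := s.exists_mem_eq_sup' hs f
  obtain ⟨b, hb, hgb⟩ := t.exists_mem_eq_sup' ht g
  refine le_antisymm (Finset.sup'_le _ _ fun p hp => ?_) ?_
  · obtain ⟨hp1, hp2⟩ := Finset.mem_product.mp hp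
    exact mul_le_mul (s.le_sup' f hp1) (t.le_sup' g hp2) (hg _ hp2) (hfa ▸ hf a ha)
  · rw [hfa, hgb]
    exact (s ×ˢ t).le_sup' (fun p => f p.1 * g p.2)
      (Finset.mem_product.mpr ⟨ha, hb⟩ : (a, b) ∈ s ×ˢ t)

theorem Finset.sum_sum_filter_smul {α β M : Type*} [DecidableEq β] [AddCommMonoid M]
    [Module ℝ M]
    {s : Finset α} {t : Finset β} {f : α → β} (hf : ∀ a ∈ s, f a ∈ t) (c : α → ℝ) (g : β → M) :
    ∑ b ∈ t, (∑ a ∈ s with f a = b, c a) • g b = ∑ a ∈ s, c a • g (f a) := by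
  rw [← Finset.sum_fiberwise_of_maps_to hf]
  refine Finset.sum_congr rfl fun b _ => ?_
  rw [Finset.sum_smul]
  exact Finset.sum_congr rfl fun a ha => by rw [(Finset.mem_filter.mp ha).2]

section Kronecker

variable {ι κ : Type*}

-- `matVec (vecMulVec u v)` is `kronVec u v` by definition.
def kronVec (u : ι → ℝ) (v : κ → ℝ) : ι × κ → ℝ := fun q => u q.1 * v q.2

theorem sum_product_smul_vecMulVec_kronVec (X : Finset (ι → ℝ)) (Y : Finset (κ → ℝ))
    (mu : (ι → ℝ) → ℝ) (nu : (κ → ℝ) → ℝ) :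
    ∑ p ∈ X ×ˢ Y, (mu p.1 * nu p.2) • vecMulVec (kronVec p.1 p.2) (kronVec p.1 p.2)
      = covMatrix X mu ⊗ₖ covMatrix Y nu := by
  ext ⟨i, j⟩ ⟨k, l⟩
  simp only [covMatrix, kronVec, Matrix.sum_apply, kroneckerMap_apply, Matrix.smul_apply,
    vecMulVec_apply, smul_eq_mul, Finset.sum_product, Finset.sum_mul_sum]
  exact Finset.sum_congr rfl fun x _ => Finset.sum_congr rfl fun y _ => by ring

variable [Fintype ι] [Fintype κ]

theorem kronVec_dotProduct_kronVec (u u' : ι → ℝ) (v v' : κ → ℝ) :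
    kronVec u v ⬝ᵥ kronVec u' v' = (u ⬝ᵥ u') * (v ⬝ᵥ v') := by
  simp only [kronVec, dotProduct, Fintype.sum_prod_type, Finset.sum_mul_sum]
  exact Finset.sum_congr rfl fun i _ => Finset.sum_congr rfl fun j _ => by ring

theorem kronecker_mulVec_kronVec (A : Matrix ι ι ℝ) (B : Matrix κ κ ℝ) (u : ι → ℝ) (v : κ → ℝ) :
    (A ⊗ₖ B) *ᵥ kronVec u v = kronVec (A *ᵥ u) (B *ᵥ v) := by
  ext ⟨i, j⟩
  simp only [kronVec, mulVec, dotProduct, kroneckerMap_apply, Fintype.sum_prod_type,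
    Finset.sum_mul_sum]
  exact Finset.sum_congr rfl fun k _ => Finset.sum_congr rfl fun l _ => by ring

end Kronecker

section ProductDesign

variable {ι κ : Type*}

noncomputable def productDesign (X : Finset (ι → ℝ)) (Y : Finset (κ → ℝ)) (mu : (ι → ℝ) → ℝ)
    (nu : (κ → ℝ) → ℝ) (z : ι × κ → ℝ) : ℝ :=
  ∑ p ∈ X ×ˢ Y with kronVec p.1 p.2 = z, mu p.1 * nu p.2

variable {X : Finset (ι → ℝ)} {Y : Finset (κ → ℝ)} {mu : (ι → ℝ) → ℝ} {nu : (κ → ℝ) → ℝ}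
  {Z : Finset (ι × κ → ℝ)}

theorem productDesign_nonneg (hmu : ∀ x ∈ X, 0 ≤ mu x) (hnu : ∀ y ∈ Y, 0 ≤ nu y)
    (z : ι × κ → ℝ) : 0 ≤ productDesign X Y mu nu z :=
  Finset.sum_nonneg fun _ hp =>
    have hXY := Finset.mem_product.mp (Finset.mem_filter.mp hp).1
    mul_nonneg (hmu _ hXY.1) (hnu _ hXY.2)

theorem sum_productDesign (hZ : ∀ p ∈ X ×ˢ Y, kronVec p.1 p.2 ∈ Z) :
    ∑ z ∈ Z, productDesign X Y mu nu z = (∑ x ∈ X, mu x) * ∑ y ∈ Y, nu y := by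
  simpa [productDesign, Finset.sum_product, Finset.sum_mul_sum] using
    Finset.sum_sum_filter_smul hZ (fun p => mu p.1 * nu p.2) fun _ => (1 : ℝ)

theorem covMatrix_productDesign (hZ : ∀ p ∈ X ×ˢ Y, kronVec p.1 p.2 ∈ Z) :
    covMatrix Z (productDesign X Y mu nu) = covMatrix X mu ⊗ₖ covMatrix Y nu := by
  rw [covMatrix]
  simp only [productDesign]
  rw [Finset.sum_sum_filter_smul hZ, sum_product_smul_vecMulVec_kronVec]

theorem gObj_productDesign [Fintype ι] [Fintype κ] [DecidableEq ι] [DecidableEq κ]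
    (hX : X.Nonempty) (hY : Y.Nonempty) (hmu : ∀ x ∈ X, 0 ≤ mu x) (hnu : ∀ y ∈ Y, 0 ≤ nu y)
    {a b : ℝ} (ha : gObj X hX mu = a) (hb : gObj Y hY nu = b)
    (hZ : Z = (X ×ˢ Y).image fun p => kronVec p.1 p.2) (hZne : Z.Nonempty) :
    gObj Z hZne (productDesign X Y mu nu) = (a * b : ℝ) := by
  obtain ⟨hA, hsupA⟩ := gObj_eq_coe_iff.mp ha
  obtain ⟨hB, hsupB⟩ := gObj_eq_coe_iff.mp hb
  subst hZ
  rw [gObj_eq_coe_iff, covMatrix_productDesign fun p => Finset.mem_image_of_mem _,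
    inv_kronecker, Finset.sup'_image]
  refine ⟨hA.kronecker hB, ?_⟩
  simp only [Function.comp_def, kronecker_mulVec_kronVec, kronVec_dotProduct_kronVec]
  rw [Finset.sup'_product_mul_of_nonneg hX hY
    (fun x _ => dotProduct_inv_covMatrix_mulVec_nonneg hmu x)
    (fun y _ => dotProduct_inv_covMatrix_mulVec_nonneg hnu y), hsupA, hsupB]

end ProductDesign

/-- Optimal design transfer (`μ` to `λ`): let `X ⊆ ℝ^d` be finite and spanning and
`Z = {vec(x x'ᵀ) : (x,x') ∈ X²} ⊆ ℝ^{d²}`.  If `μ⋆` minimizes the G-optimal design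
objective over the simplex on `X`, then the product distribution `λ⋆` (pushforward
of `μ⋆ ⊗ μ⋆` under `(x,x') ↦ vec(x x'ᵀ)`, i.e. `λ⋆_{vec(x x'ᵀ)} = μ⋆_x μ⋆_{x'}`)
lies in the simplex on `Z` and minimizes the G-optimal design objective over the
simplex on `Z`; moreover the two minimal values are `d` and `d²` respectively. -/
theorem optimal_design_transfer {d : ℕ}
    (X : Finset (Fin d → ℝ)) (hX : X.Nonempty)
    (hspan : Submodule.span ℝ (X : Set (Fin d → ℝ)) = ⊤)
    (mustar : (Fin d → ℝ) → ℝ)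
    (hmu : (∀ x ∈ X, 0 ≤ mustar x) ∧ ∑ x ∈ X, mustar x = 1)
    (hmin : ∀ mu : (Fin d → ℝ) → ℝ,
      (∀ x ∈ X, 0 ≤ mu x) → ∑ x ∈ X, mu x = 1 →
        gObj X hX mustar ≤ gObj X hX mu)
    (Z : Finset (Fin d × Fin d → ℝ))
    (hZdef : Z = (X ×ˢ X).image fun p => matVec (vecMulVec p.1 p.2))
    (hZne : Z.Nonempty)
    (lamstar : (Fin d × Fin d → ℝ) → ℝ)
    (hlam : ∀ z, lamstar z =
      ∑ p ∈ (X ×ˢ X).filter (fun p => matVec (vecMulVec p.1 p.2) = z),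
        mustar p.1 * mustar p.2) :
    ((∀ z ∈ Z, 0 ≤ lamstar z) ∧ ∑ z ∈ Z, lamstar z = 1) ∧
      (∀ lam : (Fin d × Fin d → ℝ) → ℝ,
        (∀ z ∈ Z, 0 ≤ lam z) → ∑ z ∈ Z, lam z = 1 →
          gObj Z hZne lamstar ≤ gObj Z hZne lam) ∧
      gObj X hX mustar = (d : EReal) ∧
      gObj Z hZne lamstar = ((d ^ 2 : ℕ) : EReal) := by
  obtain ⟨hmu0, hmu1⟩ := hmu
  obtain rfl : lamstar = productDesign X X mustar mustar := funext fun z => by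
    rw [hlam, productDesign]
    -- the two filters differ only in their decidability instances
    congr 1
    ext
    simp only [Finset.mem_filter]
    rfl
  have hXval : gObj X hX mustar = (d : ℝ) := by
    obtain ⟨mu, hmu0', hmu1', hle⟩ := exists_gObj_le_card X hX hspan
    refine le_antisymm ?_ ?_
    · simpa using (hmin mu hmu0' hmu1').trans hle
    · simpa using card_le_gObj X hX hmu0 hmu1
  have hZval : gObj Z hZne (productDesign X X mustar mustar) = ((d ^ 2 : ℕ) : EReal) := by
    rw [gObj_productDesign hX hX hmu0 hmu0 hXval hXval hZdef, ← EReal.coe_coe_eq_natCast,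
      Nat.cast_pow, sq]
  refine ⟨⟨fun z _ => productDesign_nonneg hmu0 hmu0 z, ?_⟩, fun lam hlam0 hlam1 => ?_,
    by simpa using hXval, hZval⟩
  · rw [sum_productDesign (hZdef ▸ fun p => Finset.mem_image_of_mem _), hmu1, one_mul]
  · rw [hZval]
    simpa [sq] using card_le_gObj Z hZne hlam0 hlam1
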